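/- arXiv:1910.04198 — 3 statements merged into one kernel-verified Lean document; each statement's English description precedes it below -/
import Mathlib

section
/- Let n ≥ 2 and let a = (a_1,…,a_n), b = (b_1,…,b_n) be tuples of integers such that for some i with 1 ≤ i ≤ n−1 one has a_{i+1} = a_i − 1 and b_{i+1} = b_i − 1. Then Σ'_{l_1=a_1..b_1} Σ'_{l_2=a_2..b_2} ⋯ Σ'_{l_n=a_n..b_n} sgt(l_1,…,l_n) = 0. -/
/-- The signed sum `Σ'_{l=a..b} f(l)`: the ordinary sum over `[a,b]` when `a ≤ b`,
and `-Σ_{l=b+1}^{a-1} f(l)` when `a > b`. -/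
noncomputable def ssum (a b : ℤ) (f : ℤ → ℤ) : ℤ :=
  if a ≤ b then ∑ l ∈ Finset.Icc a b, f l else -∑ l ∈ Finset.Icc (b + 1) (a - 1), f l

/-- Iterated signed sum over the box `[a 0, b 0] × ⋯ × [a (m-1), b (m-1)]`,
one signed sum per coordinate. -/
noncomputable def sbox : (m : ℕ) → (Fin m → ℤ) → (Fin m → ℤ) → ((Fin m → ℤ) → ℤ) → ℤ
  | 0, _, _, f => f Fin.elim0
  | m + 1, a, b, f =>
      ssum (a 0) (b 0) fun l =>
        sbox m (fun i => a i.succ) (fun i => b i.succ) fun t => f (Fin.cons l t)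

/-- The signed Gelfand–Tsetlin count: `sgt k = 1` for tuples of length `≤ 1`, and
`sgt (k_1,…,k_n) = Σ'_{l_1=k_1..k_2} ⋯ Σ'_{l_{n-1}=k_{n-1}..k_n} sgt (l_1,…,l_{n-1})`. -/
noncomputable def sgt : (n : ℕ) → (Fin n → ℤ) → ℤ
  | 0, _ => 1
  | 1, _ => 1
  | n + 2, k => sbox (n + 1) (fun i => k i.castSucc) (fun i => k i.succ) (sgt (n + 1))

/-!
The signed count `sgt` is alternating under the involution `adjSwap i`, which replaces the
adjacent entries `(x, y)` at positions `i, i + 1` by `(y + 1, x - 1)`. This is proved by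
induction on the length: the swap changes at most three consecutive summation ranges of the
recursion, and Chasles' relation for signed sums reduces the difference to sums over boxes
`[A, B] × [A - 1, B - 1]` of functions `H` with `H (v + 1) (u - 1) = -H u v`. Such a box sum
vanishes, since shifting the second coordinate and exchanging the two sums turns it into its own
negative. The theorem is this vanishing statement once more, for the coordinates `i, i + 1`
of the box, using that `sgt` is alternating.
-/

theorem Int.funext_of_add_one_sub_eq {M : Type*} [AddCommGroup M] {S T : ℤ → M} (c₀ : ℤ)
    (h₀ : S c₀ = T c₀) (h : ∀ c, S (c + 1) - S c = T (c + 1) - T c) : S = T := by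
  funext c
  induction c using Int.inductionOn' with
  | b => exact c₀
  | zero => exact h₀
  | succ c _ ih => simpa [ih] using h c
  | pred c _ ih => simpa [ih] using h (c - 1)

theorem ssum_neg (a b : ℤ) (f : ℤ → ℤ) : ssum a b (fun l => -f l) = -ssum a b f := by
  unfold ssum; split_ifs <;> simp

theorem ssum_add (a b : ℤ) (f g : ℤ → ℤ) :
    ssum a b (fun l => f l + g l) = ssum a b f + ssum a b g := by
  unfold ssum; split_ifs <;> simp [Finset.sum_add_distrib]; ring

theorem ssum_zero (a b : ℤ) : ssum a b (fun _ => 0) = 0 := by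
  unfold ssum; split_ifs <;> simp

theorem ssum_comm (a b c d : ℤ) (F : ℤ → ℤ → ℤ) :
    ssum a b (fun u => ssum c d (F u)) = ssum c d (fun v => ssum a b (fun u => F u v)) := by
  unfold ssum; split_ifs <;> simp only [Finset.sum_neg_distrib, neg_neg] <;> rw [Finset.sum_comm]

theorem ssum_self_sub_one (a : ℤ) (f : ℤ → ℤ) : ssum a (a - 1) f = 0 := by
  simp [ssum]

theorem ssum_add_one_right (a b : ℤ) (f : ℤ → ℤ) :
    ssum a (b + 1) f = ssum a b f + f (b + 1) := by
  unfold ssum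
  rcases lt_trichotomy a (b + 1) with h | rfl | h
  · rw [if_pos (by omega), if_pos (by omega), ← Finset.insert_Icc_right_eq_Icc_add_one h.le,
      Finset.sum_insert (by simp), add_comm]
  · simp
  · rw [if_neg (by omega), if_neg (by omega),
      ← Finset.insert_Icc_add_one_left_eq_Icc (a := b + 1) (b := a - 1) (by omega),
      Finset.sum_insert (by simp)]
    ring

theorem ssum_add_ssum (a b c : ℤ) (f : ℤ → ℤ) :
    ssum a b f + ssum (b + 1) c f = ssum a c f := by
  have := Int.funext_of_add_one_sub_eq (S := fun c => ssum a b f + ssum (b + 1) c f)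
    (T := fun c => ssum a c f) b (by simpa using ssum_self_sub_one (b + 1) f)
    fun c => by simp [ssum_add_one_right]
  exact congrFun this c

theorem ssum_add_one_sub_one (a b : ℤ) (f : ℤ → ℤ) : ssum (b + 1) (a - 1) f = -ssum a b f := by
  linarith [ssum_add_ssum a b (a - 1) f, ssum_self_sub_one a f]

theorem ssum_sub_one_sub_one (a b : ℤ) (f : ℤ → ℤ) :
    ssum (a - 1) (b - 1) f = ssum a b (fun l => f (l - 1)) := by
  have := Int.funext_of_add_one_sub_eq (S := fun b => ssum (a - 1) (b - 1) f)
    (T := fun b => ssum a b (fun l => f (l - 1))) (a - 1) (by simp only [ssum_self_sub_one])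
    fun c => by
      have := ssum_add_one_right (a - 1) (c - 1) f
      rw [sub_add_cancel] at this
      simp [ssum_add_one_right, this]
  exact congrFun this b

section Skew

variable (H : ℤ → ℤ → ℤ) (hH : ∀ u v, H (v + 1) (u - 1) = -H u v)
include hH

theorem ssum_ssum_sub_one_eq_zero (A B : ℤ) :
    ssum A B (fun u => ssum (A - 1) (B - 1) (H u)) = 0 := by
  have hH' (u v : ℤ) : H u (v - 1) = -H v (u - 1) := by
    have := hH u (v - 1)
    rw [sub_add_cancel] at this
    linarith
  set S := ssum A B (fun u => ssum A B (fun v => H u (v - 1)))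
  have hS : S = -S := calc
    S = ssum A B (fun v => ssum A B (fun u => H u (v - 1))) := ssum_comm ..
    _ = ssum A B (fun v => ssum A B (fun u => -H v (u - 1))) :=
      congrArg _ (funext fun v => congrArg _ (funext fun u => hH' u v))
    _ = -S := by simp only [ssum_neg]; rfl
  simp only [ssum_sub_one_sub_one]
  omega

theorem ssum_ssum_swap_bounds (x y w : ℤ) :
    ssum (y + 1) (x - 1) (fun u => ssum (x - 1) w (H u))
      = -ssum x y (fun u => ssum y w (H u)) := by
  have split (u : ℤ) : ssum (x - 1) w (H u) = ssum (x - 1) (y - 1) (H u) + ssum y w (H u) := by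
    simpa using (ssum_add_ssum (x - 1) (y - 1) w (H u)).symm
  rw [ssum_add_one_sub_one, funext split, ssum_add, ssum_ssum_sub_one_eq_zero H hH, zero_add]

theorem ssum_ssum_move_upper (p x y : ℤ) :
    ssum p (y + 1) (fun u => ssum x y (H u)) = ssum p x (fun u => ssum x y (H u)) := by
  have := ssum_ssum_sub_one_eq_zero H hH (x + 1) (y + 1)
  simp only [add_sub_cancel_right] at this
  rw [← ssum_add_ssum p x (y + 1), this, add_zero]

end Skew

-- In the shifted coordinates `k j + j` this is the transposition of the entries `i` and `i + 1`.
def adjSwap {n : ℕ} (i : Fin n) (k : Fin (n + 1) → ℤ) : Fin (n + 1) → ℤ :=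
  Function.update (Function.update k i.castSucc (k i.succ + 1)) i.succ (k i.castSucc - 1)

theorem adjSwap_zero_cons_cons {n : ℕ} (x y : ℤ) (k : Fin n → ℤ) :
    adjSwap 0 (Fin.cons x (Fin.cons y k)) = Fin.cons (y + 1) (Fin.cons (x - 1) k) := by
  rw [adjSwap, Fin.castSucc_zero, Fin.update_cons_zero, ← Fin.cons_update, Fin.update_cons_zero]
  simp

theorem adjSwap_succ_cons {n : ℕ} (i : Fin n) (x : ℤ) (k : Fin (n + 1) → ℤ) :
    adjSwap i.succ (Fin.cons x k) = Fin.cons x (adjSwap i k) := by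
  simp only [adjSwap, ← Fin.succ_castSucc, Fin.cons_succ, Fin.cons_update]

theorem sbox_cons (m : ℕ) (a₀ b₀ : ℤ) (a b : Fin m → ℤ) (f : (Fin (m + 1) → ℤ) → ℤ) :
    sbox (m + 1) (Fin.cons a₀ a) (Fin.cons b₀ b) f
      = ssum a₀ b₀ (fun u => sbox m a b (fun t => f (Fin.cons u t))) :=
  rfl

theorem sbox_neg (m : ℕ) (a b : Fin m → ℤ) (f : (Fin m → ℤ) → ℤ) :
    sbox m a b (fun t => -f t) = -sbox m a b f := by
  induction m with
  | zero => rfl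
  | succ m ih => simp only [sbox, ih, ssum_neg]

theorem sbox_cons_cons_skew {m : ℕ} (g : (Fin (m + 2) → ℤ) → ℤ)
    (hg : ∀ t, g (adjSwap 0 t) = -g t) (a b : Fin m → ℤ) (u v : ℤ) :
    sbox m a b (fun t => g (Fin.cons (v + 1) (Fin.cons (u - 1) t)))
      = -sbox m a b (fun t => g (Fin.cons u (Fin.cons v t))) := by
  rw [← sbox_neg]
  congr 1
  funext t
  rw [← hg, adjSwap_zero_cons_cons]

noncomputable def interlaceSum {m : ℕ} (g : (Fin m → ℤ) → ℤ) (k : Fin (m + 1) → ℤ) : ℤ :=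
  sbox m (fun j => k j.castSucc) (fun j => k j.succ) g

theorem interlaceSum_cons {m : ℕ} (g : (Fin (m + 1) → ℤ) → ℤ) (x : ℤ) (k : Fin (m + 1) → ℤ) :
    interlaceSum g (Fin.cons x k)
      = ssum x (k 0) (fun u => interlaceSum (fun t => g (Fin.cons u t)) k) :=
  rfl

section Antisymm

variable {m : ℕ} (g : (Fin (m + 1) → ℤ) → ℤ) (hg : ∀ j t, g (adjSwap j t) = -g t)
include hg

theorem interlaceSum_adjSwap_zero (k : Fin (m + 2) → ℤ) :
    interlaceSum g (adjSwap 0 k) = -interlaceSum g k := by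
  induction k using Fin.consCases with | _ x k =>
  induction k using Fin.consCases with | _ y k =>
  rw [adjSwap_zero_cons_cons, interlaceSum_cons, interlaceSum_cons]
  simp only [Fin.cons_zero]
  cases m with
  | zero => exact ssum_add_one_sub_one x y _
  | succ m =>
    simp only [interlaceSum_cons]
    exact ssum_ssum_swap_bounds _ (sbox_cons_cons_skew g (hg 0) _ _) x y (k 0)

theorem interlaceSum_adjSwap (i : Fin (m + 1)) (k : Fin (m + 2) → ℤ) :
    interlaceSum g (adjSwap i k) = -interlaceSum g k := by
  induction m with
  | zero =>
    obtain rfl : i = 0 := Fin.fin_one_eq_zero i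
    exact interlaceSum_adjSwap_zero g hg k
  | succ m ih =>
    cases i using Fin.cases with
    | zero => exact interlaceSum_adjSwap_zero g hg k
    | succ i =>
      induction k using Fin.consCases with | _ p k =>
      have inner (u : ℤ) : interlaceSum (fun t => g (Fin.cons u t)) (adjSwap i k)
          = -interlaceSum (fun t => g (Fin.cons u t)) k :=
        ih _ (fun j t => by rw [← hg j.succ, adjSwap_succ_cons]) i k
      simp only [adjSwap_succ_cons, interlaceSum_cons, inner, ssum_neg]
      congr 1
      cases i using Fin.cases with
      | zero =>
        induction k using Fin.consCases with | _ x k =>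
        induction k using Fin.consCases with | _ y k =>
        simp only [adjSwap_zero_cons_cons, Fin.cons_zero, interlaceSum_cons]
        exact ssum_ssum_move_upper _ (sbox_cons_cons_skew g (hg 0) _ _) p x y
      | succ i =>
        induction k using Fin.consCases with | _ x k =>
        simp only [adjSwap_succ_cons, Fin.cons_zero]

end Antisymm

theorem sgt_adjSwap : ∀ (n : ℕ) (i : Fin n) (k : Fin (n + 1) → ℤ),
    sgt (n + 1) (adjSwap i k) = -sgt (n + 1) k
  | 0, i, _ => i.elim0
  | n + 1, i, k => interlaceSum_adjSwap (sgt (n + 1)) (sgt_adjSwap n) i k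

theorem sbox_eq_zero_of_adjSwap {n : ℕ} (i : Fin n) (g : (Fin (n + 1) → ℤ) → ℤ)
    (hg : ∀ t, g (adjSwap i t) = -g t) (a b : Fin (n + 1) → ℤ)
    (ha : a i.succ = a i.castSucc - 1) (hb : b i.succ = b i.castSucc - 1) :
    sbox (n + 1) a b g = 0 := by
  induction i using Fin.succRecOn with
  | zero n =>
    induction a using Fin.consCases with | _ a₀ a =>
    induction a using Fin.consCases with | _ a₁ a =>
    induction b using Fin.consCases with | _ b₀ b =>
    induction b using Fin.consCases with | _ b₁ b =>
    simp only [Fin.succ_zero_eq_one, Fin.castSucc_zero, Fin.cons_one, Fin.cons_zero] at ha hb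
    subst ha hb
    simp only [sbox_cons]
    exact ssum_ssum_sub_one_eq_zero _ (sbox_cons_cons_skew g hg _ _) a₀ b₀
  | succ n i ih =>
    induction a using Fin.consCases with | _ a₀ a =>
    induction b using Fin.consCases with | _ b₀ b =>
    simp only [← Fin.succ_castSucc, Fin.cons_succ] at ha hb
    have inner (u : ℤ) : sbox (n + 1) a b (fun t => g (Fin.cons u t)) = 0 :=
      ih _ (fun t => by rw [← hg, adjSwap_succ_cons]) a b ha hb
    simp only [sbox_cons, inner, ssum_zero]

/-- For every `n ≥ 2`, if `a_{i+1} = a_i - 1` and `b_{i+1} = b_i - 1` for some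
`1 ≤ i ≤ n-1`, then the iterated signed sum of `sgt` over the box
`[a_1,b_1] × ⋯ × [a_n,b_n]` vanishes. -/
theorem sbox_sgt_zero (n : ℕ) (a b : Fin (n + 2) → ℤ) (i : Fin (n + 1))
    (ha : a i.succ = a i.castSucc - 1) (hb : b i.succ = b i.castSucc - 1) :
    sbox (n + 2) a b (sgt (n + 2)) = 0 :=
  sbox_eq_zero_of_adjSwap i (sgt (n + 2)) (sgt_adjSwap (n + 1) i) a b ha hb
end

section
/- For every n ≥ 1 and every k = (k_1,…,k_n) ∈ ℤ^n, the signed Gelfand–Tsetlin count satisfies sgt(k) = ∏_{1 ≤ i < j ≤ n} (k_j − k_i + j − i)/(j − i), where the equality holds in ℚ (in particular the product on the right-hand side is an integer for all integer tuples k). -/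
/-!
Put `x_i = k_i + i`. The right-hand side is `V(x) / V(0, 1, …, n)` for the Vandermonde product
`V`, and expanding `V` in the binomial basis `y ↦ choose y j` (leading coefficient `1 / j!`) shows
that it equals `det (choose x_i j)`. This determinant obeys the recursion defining `sgt`: its
`i`-th row depends on `k_i` alone, so the iterated signed sum enters the rows by multilinearity;
Pascal's rule telescopes the `i`-th signed sum into the difference of rows `i + 1` and `i` of the
binomial matrix one size larger, with its first column (all ones) removed, and these row
differences do not change that larger determinant.
-/

open Finset
open scoped Nat

theorem Int.sum_Icc_sub {M : Type*} [AddCommGroup M] (H : ℤ → M) {a b : ℤ} (hab : a - 1 ≤ b) :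
    ∑ l ∈ Icc a b, (H (l + 1) - H l) = H (b + 1) - H a := by
  induction b, hab using Int.leInduction with
  | base => simp
  | succ b hb ih =>
    rw [← insert_Icc_right_eq_Icc_add_one (by omega), sum_insert (by simp), ih]
    abel

theorem ssum_sub (H : ℤ → ℤ) (a b : ℤ) :
    ssum a b (fun l => H (l + 1) - H l) = H (b + 1) - H a := by
  unfold ssum
  split_ifs
  · exact Int.sum_Icc_sub H (by omega)
  · rw [Int.sum_Icc_sub H (by omega), sub_add_cancel]
    abel

theorem ssum_mul_left (a b c : ℤ) (f : ℤ → ℤ) :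
    ssum a b (fun l => c * f l) = c * ssum a b f := by
  unfold ssum
  split_ifs <;> simp [mul_sum]

theorem ssum_mul_right (a b c : ℤ) (f : ℤ → ℤ) :
    ssum a b (fun l => f l * c) = ssum a b f * c := by
  simpa only [mul_comm _ c] using ssum_mul_left a b c f

theorem ssum_sum {ι : Type*} (s : Finset ι) (a b : ℤ) (f : ι → ℤ → ℤ) :
    ssum a b (fun l => ∑ x ∈ s, f x l) = ∑ x ∈ s, ssum a b (f x) := by
  unfold ssum
  split_ifs <;> simp [sum_comm (s := s)]

section SignedBox

variable {m : ℕ}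

theorem sbox_mul_left (a b : Fin m → ℤ) (c : ℤ) (f : (Fin m → ℤ) → ℤ) :
    sbox m a b (fun t => c * f t) = c * sbox m a b f := by
  induction m with
  | zero => rfl
  | succ m ih => simp only [sbox, ih, ssum_mul_left]

theorem sbox_sum {ι : Type*} (s : Finset ι) (a b : Fin m → ℤ) (f : ι → (Fin m → ℤ) → ℤ) :
    sbox m a b (fun t => ∑ x ∈ s, f x t) = ∑ x ∈ s, sbox m a b (f x) := by
  induction m with
  | zero => rfl
  | succ m ih => simp only [sbox, ih, ssum_sum]

theorem sbox_prod (a b : Fin m → ℤ) (g : Fin m → ℤ → ℤ) :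
    sbox m a b (fun t => ∏ i, g i (t i)) = ∏ i, ssum (a i) (b i) (g i) := by
  induction m with
  | zero => rfl
  | succ m ih =>
    simp only [sbox, Fin.prod_univ_succ, Fin.cons_zero, Fin.cons_succ, sbox_mul_left, ih,
      ssum_mul_right]

theorem sbox_det (a b : Fin m → ℤ) (g : Fin m → ℤ → Fin m → ℤ) :
    sbox m a b (fun t => (Matrix.of fun i j => g i (t i) j).det) =
      (Matrix.of fun i j => ssum (a i) (b i) fun l => g i l j).det := by
  simp only [← Matrix.det_transpose (Matrix.of _), Matrix.det_apply', Matrix.transpose_apply,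
    Matrix.of_apply, sbox_sum, sbox_mul_left]
  exact sum_congr rfl fun σ _ => congrArg _ (sbox_prod a b fun i l => g i l (σ i))

end SignedBox

theorem ssum_choose (c d x : ℤ) (j : ℕ) :
    ssum c d (fun l => Ring.choose (l + x) j) =
      Ring.choose (d + 1 + x) (j + 1) - Ring.choose (c + x) (j + 1) := by
  have pascal : (fun l => Ring.choose (l + x) j) =
      fun l => Ring.choose (l + 1 + x) (j + 1) - Ring.choose (l + x) (j + 1) := by
    funext l
    rw [add_right_comm, Ring.choose_succ_succ, add_sub_cancel_right]
  rw [pascal, ssum_sub (fun l => Ring.choose (l + x) (j + 1))]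

theorem Matrix.det_eq_det_succ_sub_castSucc {R : Type*} [CommRing R] {n : ℕ}
    (A : Matrix (Fin (n + 2)) (Fin (n + 2)) R) (hA : ∀ i, A i 0 = 1) :
    A.det = (Matrix.of fun i j : Fin (n + 1) => A i.succ j.succ - A i.castSucc j.succ).det := by
  let B : Matrix (Fin (n + 2)) (Fin (n + 2)) R :=
    Matrix.of (Fin.cases (A 0) fun i => A i.succ - A i.castSucc)
  have hAB : A.det = B.det :=
    Matrix.det_eq_of_forall_row_eq_smul_add_pred (fun _ => 1) (fun _ => rfl)
      (fun i j => by simp [B])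
  rw [hAB, Matrix.det_succ_column_zero, Fin.sum_univ_succ]
  simp [B, hA, Matrix.submatrix]

theorem sgt_eq_det_choose (n : ℕ) (k : Fin (n + 1) → ℤ) :
    sgt (n + 1) k = (Matrix.of fun i j : Fin (n + 1) => Ring.choose (k i + (i : ℕ)) j).det := by
  induction n with
  | zero => simp [sgt]
  | succ n ih =>
    calc sgt (n + 2) k
        = (Matrix.of fun i j : Fin (n + 1) =>
            ssum (k i.castSucc) (k i.succ) fun l => Ring.choose (l + (i : ℕ)) j).det := by
          rw [sgt, ← sbox_det]
          exact congrArg _ (funext ih)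
      _ = (Matrix.of fun i j : Fin (n + 1) => Ring.choose (k i.succ + (i.succ : ℕ)) j.succ -
            Ring.choose (k i.castSucc + (i.castSucc : ℕ)) j.succ).det := by
          simp only [ssum_choose, Fin.val_succ, Fin.val_castSucc, Nat.cast_succ, add_assoc,
            add_comm (1 : ℤ)]
      _ = _ := (Matrix.det_eq_det_succ_sub_castSucc
          (Matrix.of fun i j => Ring.choose (k i + (i : ℕ)) j)
          fun _ => Ring.choose_zero_right _).symm

theorem descPochhammer_eval_eq_factorial_mul_choose (y : ℚ) (j : ℕ) :
    (descPochhammer ℚ j).eval y = j ! * Ring.choose y j := by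
  rw [← descPochhammer_map (algebraMap ℤ ℚ), Polynomial.eval_map_algebraMap,
    Polynomial.aeval_eq_smeval, Ring.descPochhammer_eq_factorial_smul_choose, nsmul_eq_mul]

theorem det_vandermonde_eq_prod_factorial_mul {m : ℕ} (y : Fin m → ℚ) :
    (Matrix.vandermonde y).det =
      (∏ j : Fin m, ((j : ℕ) ! : ℚ)) * (Matrix.of fun i j : Fin m => Ring.choose (y i) j).det := by
  rw [Matrix.det_eval_matrixOfPolynomials_eq_det_vandermonde y (fun j => descPochhammer ℚ j)
    (fun j => descPochhammer_natDegree ℚ j) (fun j => monic_descPochhammer ℚ j),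
    ← Matrix.det_mul_row]
  simp only [descPochhammer_eval_eq_factorial_mul_choose, Matrix.of_apply]

theorem det_choose_eq_prod (n : ℕ) (y : Fin (n + 1) → ℚ) :
    (Matrix.of fun i j : Fin (n + 1) => Ring.choose (y i) j).det =
      ∏ i : Fin (n + 1), ∏ j ∈ Ioi i, (y j - y i) / ((j : ℕ) - (i : ℕ) : ℚ) := by
  have hsf : ∏ j : Fin (n + 1), ((j : ℕ) ! : ℚ) = n.superFactorial := by
    rw [Fin.prod_univ_eq_prod_range (fun j => (j ! : ℚ)), ← Nat.prod_range_succ_factorial]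
    push_cast
    rfl
  have hfac : ∏ j : Fin (n + 1), ((j : ℕ) ! : ℚ) ≠ 0 := prod_ne_zero_iff.mpr fun j _ => by positivity
  simp only [prod_div_distrib]
  rw [← Matrix.det_vandermonde y, ← Matrix.det_vandermonde (fun i : Fin (n + 1) => ((i : ℕ) : ℚ)),
    Matrix.det_vandermonde_id_eq_superFactorial, ← hsf, det_vandermonde_eq_prod_factorial_mul,
    mul_div_cancel_left₀ _ hfac]

/-- For every `n ≥ 1` and `k ∈ ℤ^n`, the signed Gelfand–Tsetlin count satisfies
`sgt k = ∏_{1 ≤ i < j ≤ n} (k_j - k_i + j - i)/(j - i)` as rational numbers. -/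
theorem sgt_product_formula (n : ℕ) (k : Fin (n + 1) → ℤ) :
    (sgt (n + 1) k : ℚ) =
      ∏ i : Fin (n + 1), ∏ j ∈ Finset.Ioi i,
        (((k j : ℚ) - (k i : ℚ) + (j.1 : ℚ) - (i.1 : ℚ)) / ((j.1 : ℚ) - (i.1 : ℚ))) := by
  have hcast : (Matrix.of fun i j : Fin (n + 1) => Ring.choose (k i + (i : ℕ)) j).map (↑) =
      Matrix.of fun i j : Fin (n + 1) => Ring.choose ((k i : ℚ) + (i : ℕ)) j := by
    ext i j
    simpa using Ring.map_choose (Int.castRingHom ℚ) (k i + (i : ℕ)) j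
  rw [sgt_eq_det_choose, Int.cast_det, hcast, det_choose_eq_prod]
  refine prod_congr rfl fun i _ => prod_congr rfl fun j _ => ?_
  ring
end

section
/- For every n ≥ 1, the map sending an n × n alternating sign matrix (a_{i,j}) to the triangular array whose i-th row (for 1 ≤ i ≤ n) consists of the columns j, listed in increasing order, for which Σ_{i'=1}^{i} a_{i',j} = 1, is a bijection from the set of n × n alternating sign matrices to the set of monotone triangles with bottom row (1,2,…,n). In particular, the number of n × n alternating sign matrices equals the number of monotone triangles with bottom row (1,2,…,n). -/
/-- A triangular array of integers `(T_{i,j})_{1 ≤ j ≤ i ≤ n}` (0-indexed: row `i` has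
`i+1` entries). -/
abbrev TriArray (n : ℕ) := (i : Fin n) → Fin (i.1 + 1) → ℤ

/-- The bottom row of the triangular array `T` is `k`. -/
def BottomRow {n : ℕ} (T : TriArray n) (k : Fin n → ℤ) : Prop :=
  ∀ (i : Fin n) (h : i.1 + 1 = n) (j : Fin (i.1 + 1)), T i j = k (Fin.cast h j)

/-- `T` is a (classical) monotone triangle with bottom row `k`: entries increase weakly
along both diagonals and strictly along rows. -/
def IsMT {n : ℕ} (T : TriArray n) (k : Fin n → ℤ) : Prop :=
  BottomRow T k ∧
  (∀ (i : Fin n) (h : i.1 + 1 < n) (j : Fin (i.1 + 1)),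
    T ⟨i.1 + 1, h⟩ j.castSucc ≤ T i j ∧ T i j ≤ T ⟨i.1 + 1, h⟩ j.succ) ∧
  (∀ (i : Fin n) (j : Fin i.1), T i j.castSucc < T i j.succ)

/-- The nonzero entries of `v` alternate in sign and sum up to `1`, and all entries
are in `{0, 1, -1}`. -/
def AltLine {n : ℕ} (v : Fin n → ℤ) : Prop :=
  (∀ j, v j = 0 ∨ v j = 1 ∨ v j = -1) ∧
  (∑ j, v j) = 1 ∧
  ∀ j₁ j₂ : Fin n, j₁ < j₂ → v j₁ ≠ 0 → v j₂ ≠ 0 →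
    (∀ j, j₁ < j → j < j₂ → v j = 0) → v j₂ = -v j₁

/-- `M` is an alternating sign matrix: entries in `{0,1,-1}` such that in each row and
each column the nonzero entries alternate in sign and sum up to `1`. -/
def IsASM {n : ℕ} (M : Fin n → Fin n → ℤ) : Prop :=
  (∀ i, AltLine (M i)) ∧ ∀ j, AltLine fun i => M i j

/-- The triangular array `T` corresponds to the matrix `M`: for every `i`, the `i`-th row
of `T` consists exactly of those columns `j` (as values `j+1`, and rows of monotone
triangles are strictly increasing, so listed in increasing order) for which
`Σ_{i'=1}^{i} M_{i',j} = 1`. -/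
def ASMCorr {n : ℕ} (M : Fin n → Fin n → ℤ) (T : TriArray n) : Prop :=
  ∀ (i : Fin n) (j : Fin n),
    (∑ i' ∈ Finset.Iic i, M i' j) = 1 ↔ ∃ j' : Fin (i.1 + 1), T i j' = (j.1 : ℤ) + 1

/-!
An alternating sign matrix and a monotone triangle with bottom row `(1, …, N)` are both encoded by
a chain of column sets `∅ = C 0, C 1, …, C N = univ` with `#(C r) = r`: for the matrix, `C r` is
the set of columns whose first `r` entries sum to `1`; for the triangle, `C (i + 1)` is the set of
columns `j` such that `j + 1` occurs in row `i`. A line is alternating with sum `1` exactly when its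
prefix sums lie in `{0, 1}` and its total is `1`. For the matrix built from a chain this makes the
column conditions automatic and turns the row conditions into
`#(C r ∩ Iic x) ≤ #(C (r + 1) ∩ Iic x) ≤ #(C r ∩ Iic x) + 1` for all `x`; for the increasing
enumerations of the sets this is equivalent to the interlacing `b k ≤ a k ≤ b (k + 1)` of
consecutive rows of the triangle.
-/

open Finset

lemma ncard_setOf_eq_of_existsUnique {α β : Type*} {p : α → Prop} {q : β → Prop}
    (R : α → β → Prop) (h₁ : ∀ a, p a → ∃! b, q b ∧ R a b) (h₂ : ∀ b, q b → ∃! a, p a ∧ R a b) :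
    {a | p a}.ncard = {b | q b}.ncard := by
  refine Set.ncard_congr (fun a ha => (h₁ a ha).exists.choose)
    (fun a ha => (h₁ a ha).exists.choose_spec.1) (fun a a' ha ha' heq => ?_) fun b hb => ?_
  · have hb := (h₁ a ha).exists.choose_spec
    have hb' := (h₁ a' ha').exists.choose_spec
    rw [heq] at hb
    exact (h₂ _ hb'.1).unique ⟨ha, hb.2⟩ ⟨ha', hb'.2⟩
  · obtain ⟨a, ⟨ha, hab⟩, -⟩ := h₂ b hb
    exact ⟨a, ha, (h₁ a ha).unique (h₁ a ha).exists.choose_spec ⟨hb, hab⟩⟩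

section PrefixSum

variable {N : ℕ}

def prefixSum (v : Fin N → ℤ) (r : ℕ) : ℤ := ∑ j with j.1 < r, v j

@[simp]
lemma prefixSum_zero (v : Fin N → ℤ) : prefixSum v 0 = 0 := by
  simp [prefixSum]

lemma prefixSum_succ (v : Fin N → ℤ) {r : ℕ} (hr : r < N) :
    prefixSum v (r + 1) = prefixSum v r + v ⟨r, hr⟩ := by
  have hsplit : ({j | j.1 < r + 1} : Finset (Fin N)) =
      insert (⟨r, hr⟩ : Fin N) ({j | j.1 < r} : Finset (Fin N)) := by
    ext j
    simp only [mem_filter, mem_univ, true_and, mem_insert, Fin.ext_iff]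
    omega
  rw [prefixSum, hsplit, sum_insert (by simp), prefixSum, add_comm]

lemma prefixSum_of_le (v : Fin N → ℤ) {r : ℕ} (hr : N ≤ r) : prefixSum v r = ∑ j, v j := by
  rw [prefixSum, filter_true_of_mem fun j _ => lt_of_lt_of_le j.2 hr]

lemma sum_Iic_eq_prefixSum (v : Fin N → ℤ) (x : Fin N) :
    ∑ j ∈ Iic x, v j = prefixSum v (x.1 + 1) := by
  have hIic : (Iic x : Finset (Fin N)) = ({j | j.1 < x.1 + 1} : Finset (Fin N)) := by
    ext j
    simp only [mem_Iic, mem_filter, mem_univ, true_and, Fin.le_def]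
    omega
  rw [prefixSum, hIic]

lemma prefixSum_eq_of_forall_eq_zero (v : Fin N → ℤ) {a b : ℕ} (hab : a ≤ b)
    (h : ∀ j : Fin N, a ≤ j.1 → j.1 < b → v j = 0) : prefixSum v b = prefixSum v a := by
  refine (sum_subset (fun j => ?_) fun j hjb hja => h j ?_ ?_).symm <;>
    simp_all only [mem_filter, mem_univ, true_and, not_lt]
  omega

end PrefixSum

section AltLine

variable {N : ℕ} {v : Fin N → ℤ}

/- `c - 2 * prefixSum v r` is the value forced on the first nonzero entry after the first `r`. -/
lemma prefixSum_of_alternating {c : ℤ}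
    (halt : ∀ j₁ j₂ : Fin N, j₁ < j₂ → v j₁ ≠ 0 → v j₂ ≠ 0 →
      (∀ j, j₁ < j → j < j₂ → v j = 0) → v j₂ = -v j₁)
    (hfirst : ∀ j, v j ≠ 0 → (∀ j' < j, v j' = 0) → v j = c) {r : ℕ} (hr : r ≤ N) :
    (prefixSum v r = 0 ∨ prefixSum v r = c) ∧
      ∀ j : Fin N, r ≤ j.1 → v j ≠ 0 → (∀ j' : Fin N, r ≤ j'.1 → j' < j → v j' = 0) →
        v j = c - 2 * prefixSum v r := by
  induction r with
  | zero =>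
    refine ⟨Or.inl (prefixSum_zero v), fun j _ hj hbefore => ?_⟩
    simpa using hfirst j hj fun j' hj' => hbefore j' (Nat.zero_le _) hj'
  | succ r ih =>
    obtain ⟨hmem, hnext⟩ := ih (by omega)
    have hr' : r < N := by omega
    rw [prefixSum_succ v hr']
    set j₀ : Fin N := ⟨r, hr'⟩
    by_cases h0 : v j₀ = 0
    · refine ⟨by simpa [h0] using hmem, fun j hj hjv hbefore => ?_⟩
      rw [h0, add_zero]
      refine hnext j (by omega) hjv fun j' hj' hlt => ?_
      rcases eq_or_ne j'.1 r with h | h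
      · rwa [show j' = j₀ from Fin.ext h]
      · exact hbefore j' (by omega) hlt
    · have hj₀ : v j₀ = c - 2 * prefixSum v r :=
        hnext j₀ le_rfl h0 fun j' h1 h2 => absurd h2 (by rw [Fin.lt_def]; simp [j₀]; omega)
      refine ⟨by rcases hmem with h | h <;> [right; left] <;> linarith,
        fun j hj hjv hbefore => ?_⟩
      have := halt j₀ j (by rw [Fin.lt_def]; simp [j₀]; omega) h0 hjv
        fun j' h1 h2 => hbefore j' (by rw [Fin.lt_def] at h1; simp [j₀] at h1; omega) h2
      linarith

lemma AltLine.prefixSum_mem (hv : AltLine v) {r : ℕ} (hr : r ≤ N) :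
    prefixSum v r = 0 ∨ prefixSum v r = 1 := by
  obtain ⟨-, hsum, halt⟩ := hv
  set nz : Finset (Fin N) := {j | v j ≠ 0}
  have hs : nz.Nonempty := by
    obtain ⟨j, -, hj⟩ := exists_ne_zero_of_sum_ne_zero (hsum ▸ one_ne_zero : ∑ j, v j ≠ 0)
    exact ⟨j, by simpa [nz] using hj⟩
  set f := nz.min' hs
  have hbefore : ∀ j < f, v j = 0 := fun j hj => by
    by_contra h
    exact absurd (min'_le nz j (by simpa [nz] using h)) (not_le.mpr hj)
  have hfirst : ∀ j, v j ≠ 0 → (∀ j' < j, v j' = 0) → v j = v f := fun j hj hj' => by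
    obtain heq | hlt := (min'_le nz j (by simpa [nz] using hj)).eq_or_lt
    · rw [← heq]
    · exact absurd (hj' f hlt) (by simpa [nz] using min'_mem nz hs)
  have hc : v f = 1 := by
    have := (prefixSum_of_alternating halt hfirst le_rfl).1
    rw [prefixSum_of_le v le_rfl, hsum] at this
    omega
  simpa [hc] using (prefixSum_of_alternating halt hfirst hr).1

lemma altLine_of_prefixSum (h01 : ∀ r ≤ N, prefixSum v r = 0 ∨ prefixSum v r = 1)
    (hsum : ∑ j, v j = 1) : AltLine v := by
  have hentry (j : Fin N) : v j = prefixSum v (j.1 + 1) - prefixSum v j.1 := by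
    rw [prefixSum_succ v j.2]; ring
  refine ⟨fun j => ?_, hsum, fun j₁ j₂ hlt h₁ h₂ hbetween => ?_⟩
  · have := h01 (j.1 + 1) j.2
    have := h01 j.1 j.2.le
    rw [hentry j]
    omega
  · have hgap : prefixSum v j₂.1 = prefixSum v (j₁.1 + 1) :=
      prefixSum_eq_of_forall_eq_zero v hlt fun j h1 h2 =>
        hbetween j (by rw [Fin.lt_def]; omega) h2
    rw [hentry j₁] at h₁ ⊢
    rw [hentry j₂] at h₂ ⊢
    have := h01 (j₁.1 + 1) j₁.2
    have := h01 j₁.1 j₁.2.le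
    have := h01 (j₂.1 + 1) j₂.2
    have := h01 j₂.1 j₂.2.le
    omega

theorem altLine_iff :
    AltLine v ↔ (∀ x : Fin N, ∑ j ∈ Iic x, v j = 0 ∨ ∑ j ∈ Iic x, v j = 1) ∧ ∑ j, v j = 1 := by
  simp_rw [sum_Iic_eq_prefixSum]
  refine ⟨fun hv => ⟨fun x => hv.prefixSum_mem x.2, hv.2.1⟩,
    fun ⟨h01, hsum⟩ => altLine_of_prefixSum (fun r hr => ?_) hsum⟩
  rcases r with _ | r
  · simp
  · exact h01 ⟨r, hr⟩

end AltLine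

section Interlacing

variable {α : Type*} [LinearOrder α] {m : ℕ}

def Interlaced (s t : Finset α) : Prop :=
  ∀ x, #{j ∈ s | j ≤ x} ≤ #{j ∈ t | j ≤ x} ∧ #{j ∈ t | j ≤ x} ≤ #{j ∈ s | j ≤ x} + 1

lemma Monotone.le_iff_lt_card_filter {a : Fin m → α} (ha : Monotone a) (k : Fin m) (x : α) :
    a k ≤ x ↔ k.1 < #{k' | a k' ≤ x} := by
  constructor
  · intro hk
    have hsub : Iic k ⊆ ({k' | a k' ≤ x} : Finset (Fin m)) := fun k' hk' => by
      simpa using (ha (mem_Iic.mp hk')).trans hk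
    have := card_le_card hsub
    rw [Fin.card_Iic] at this
    omega
  · intro hk
    by_contra hx
    have hsub : ({k' | a k' ≤ x} : Finset (Fin m)) ⊆ Iio k := fun k' hk' => by
      simp only [mem_filter, mem_univ, true_and] at hk'
      exact mem_Iio.mpr (lt_of_not_ge fun hle => hx ((ha hle).trans hk'))
    have := card_le_card hsub
    rw [Fin.card_Iio] at this
    omega

theorem interlacing_iff_card_filter {a : Fin m → α} {b : Fin (m + 1) → α} (ha : Monotone a)
    (hb : Monotone b) :
    (∀ k, b k.castSucc ≤ a k ∧ a k ≤ b k.succ) ↔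
      ∀ x, #{k | a k ≤ x} ≤ #{k | b k ≤ x} ∧ #{k | b k ≤ x} ≤ #{k | a k ≤ x} + 1 := by
  constructor
  · intro h x
    have hA : #{k | a k ≤ x} ≤ m := (card_le_univ _).trans_eq (Fintype.card_fin m)
    have hB : #{k | b k ≤ x} ≤ m + 1 := (card_le_univ _).trans_eq (Fintype.card_fin _)
    constructor
    · by_contra! hlt
      set k : Fin m := ⟨#{k | b k ≤ x}, by omega⟩
      have hak := (ha.le_iff_lt_card_filter k x).2 hlt
      have := (hb.le_iff_lt_card_filter k.castSucc x).1 ((h k).1.trans hak)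
      simp [k] at this
    · by_contra! hlt
      set k : Fin m := ⟨#{k | a k ≤ x}, by omega⟩
      have hbk := (hb.le_iff_lt_card_filter k.succ x).2 (by simp [k]; omega)
      have := (ha.le_iff_lt_card_filter k x).1 ((h k).2.trans hbk)
      simp [k] at this
  · intro h k
    constructor
    · have := (ha.le_iff_lt_card_filter k (a k)).1 le_rfl
      rw [hb.le_iff_lt_card_filter]
      simp only [Fin.val_castSucc]
      exact this.trans_le (h (a k)).1
    · have := (hb.le_iff_lt_card_filter k.succ (b k.succ)).1 le_rfl
      rw [ha.le_iff_lt_card_filter]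
      have := (h (b k.succ)).2
      simp only [Fin.val_succ] at *
      omega

lemma Finset.card_filter_orderEmbOfFin_le (s : Finset α) (h : #s = m) (x : α) :
    #{k | s.orderEmbOfFin h k ≤ x} = #{j ∈ s | j ≤ x} := by
  conv_rhs => rw [← image_orderEmbOfFin_univ s h, filter_image]
  rw [card_image_of_injective _ (s.orderEmbOfFin h).injective]

theorem interlaced_iff_orderEmbOfFin {s t : Finset α} (hs : #s = m) (ht : #t = m + 1) :
    Interlaced s t ↔ ∀ k, t.orderEmbOfFin ht k.castSucc ≤ s.orderEmbOfFin hs k ∧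
      s.orderEmbOfFin hs k ≤ t.orderEmbOfFin ht k.succ := by
  rw [interlacing_iff_card_filter (s.orderEmbOfFin hs).monotone (t.orderEmbOfFin ht).monotone]
  simp only [card_filter_orderEmbOfFin_le, Interlaced]

end Interlacing

section Matrices

variable {N : ℕ}

def matrixOfSets (C : ℕ → Finset (Fin N)) : Fin N → Fin N → ℤ :=
  fun i j => (if j ∈ C (i.1 + 1) then 1 else 0) - if j ∈ C i.1 then 1 else 0

def colOnes (M : Fin N → Fin N → ℤ) (r : ℕ) : Finset (Fin N) :=
  {j | prefixSum (fun i => M i j) r = 1}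

variable {C : ℕ → Finset (Fin N)}

lemma prefixSum_col_matrixOfSets (h0 : C 0 = ∅) (j : Fin N) {r : ℕ} (hr : r ≤ N) :
    prefixSum (fun i => matrixOfSets C i j) r = if j ∈ C r then 1 else 0 := by
  induction r with
  | zero => simp [h0]
  | succ r ih =>
    rw [prefixSum_succ _ (by omega), ih (by omega)]
    simp [matrixOfSets]

lemma sum_Iic_col_matrixOfSets (h0 : C 0 = ∅) (i j : Fin N) :
    ∑ i' ∈ Iic i, matrixOfSets C i' j = if j ∈ C (i.1 + 1) then 1 else 0 := by
  rw [sum_Iic_eq_prefixSum, prefixSum_col_matrixOfSets h0 j i.2]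

lemma sum_Iic_row_matrixOfSets (i x : Fin N) :
    ∑ j ∈ Iic x, matrixOfSets C i j = #{j ∈ C (i.1 + 1) | j ≤ x} - #{j ∈ C i.1 | j ≤ x} := by
  simp only [matrixOfSets, sum_sub_distrib, sum_boole]
  congr 3 <;> ext <;> simp [and_comm]

lemma sum_row_matrixOfSets (i : Fin N) :
    ∑ j, matrixOfSets C i j = #(C (i.1 + 1)) - #(C i.1) := by
  simp [matrixOfSets, sum_sub_distrib]

theorem isASM_matrixOfSets_iff (h0 : C 0 = ∅) (hC : ∀ i : Fin N, #(C (i.1 + 1)) = i.1 + 1) :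
    IsASM (matrixOfSets C) ↔ ∀ r < N, Interlaced (C r) (C (r + 1)) := by
  have hcard : ∀ r ≤ N, #(C r) = r := by
    rintro (_ | r) hr
    · simp [h0]
    · exact hC ⟨r, hr⟩
  have hcol (j : Fin N) : AltLine fun i => matrixOfSets C i j := by
    have hlast : C N = univ := eq_univ_of_card _ (by simp [hcard N le_rfl])
    rw [altLine_iff, ← prefixSum_of_le _ le_rfl, prefixSum_col_matrixOfSets h0 j le_rfl, hlast]
    refine ⟨fun i => ?_, by simp⟩
    rw [sum_Iic_col_matrixOfSets h0]
    split_ifs <;> simp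
  have hrow (i : Fin N) : AltLine (matrixOfSets C i) ↔ Interlaced (C i.1) (C (i.1 + 1)) := by
    rw [altLine_iff, sum_row_matrixOfSets, hcard _ i.2, hcard _ i.2.le]
    simp only [sum_Iic_row_matrixOfSets, Interlaced]
    constructor
    · rintro ⟨h, -⟩ x
      have := h x
      omega
    · intro h
      exact ⟨fun x => by have := h x; omega, by push_cast; ring⟩
  constructor
  · rintro ⟨hr, -⟩ r hrN
    exact (hrow ⟨r, hrN⟩).1 (hr _)
  · exact fun h => ⟨fun i => (hrow i).2 (h i i.2), hcol⟩

lemma IsASM.eq_matrixOfSets {M : Fin N → Fin N → ℤ} (hM : IsASM M) (h0 : C 0 = ∅)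
    (hmem : ∀ i j : Fin N, j ∈ C (i.1 + 1) ↔ ∑ i' ∈ Iic i, M i' j = 1) :
    M = matrixOfSets C := by
  have hcol (j : Fin N) {r : ℕ} (hr : r ≤ N) :
      prefixSum (fun i => M i j) r = if j ∈ C r then 1 else 0 := by
    rcases r with _ | r
    · simp [h0]
    · have := (hM.2 j).prefixSum_mem hr
      simp only [hmem ⟨r, hr⟩ j, sum_Iic_eq_prefixSum]
      split_ifs <;> omega
  ext i j
  have := prefixSum_succ (fun i => M i j) i.2
  rw [hcol j i.2, hcol j i.2.le] at this
  simp only [matrixOfSets]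
  linarith

lemma card_of_isASM_matrixOfSets (hM : IsASM (matrixOfSets C)) (h0 : C 0 = ∅) (i : Fin N) :
    #(C (i.1 + 1)) = i.1 + 1 := by
  obtain ⟨i, hi⟩ := i
  induction i with
  | zero =>
    have := (hM.1 ⟨0, hi⟩).2.1
    rw [sum_row_matrixOfSets] at this
    simp_all
  | succ i ih =>
    have := (hM.1 ⟨i + 1, hi⟩).2.1
    rw [sum_row_matrixOfSets, ih (by omega)] at this
    simp only at this ⊢
    omega

end Matrices

section Triangles

variable {N : ℕ}

def triOfSets (C : ℕ → Finset (Fin N)) (hC : ∀ i : Fin N, #(C (i.1 + 1)) = i.1 + 1) :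
    TriArray N :=
  fun i k => ((C (i.1 + 1)).orderEmbOfFin (hC i) k : ℤ) + 1

def rowSets (T : TriArray N) (r : ℕ) : Finset (Fin N) :=
  {j | ∃ (i : Fin N) (k : Fin (i.1 + 1)), i.1 + 1 = r ∧ T i k = j + 1}

variable {C : ℕ → Finset (Fin N)} {T : TriArray N}

lemma exists_triOfSets_eq_iff (hC : ∀ i : Fin N, #(C (i.1 + 1)) = i.1 + 1) (i j : Fin N) :
    (∃ k, triOfSets C hC i k = j + 1) ↔ j ∈ C (i.1 + 1) := by
  simp only [triOfSets, add_left_inj, Nat.cast_inj, ← Fin.ext_iff]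
  rw [← SetLike.mem_coe, ← range_orderEmbOfFin _ (hC i), Set.mem_range]

theorem isMT_triOfSets_iff (hC : ∀ i : Fin N, #(C (i.1 + 1)) = i.1 + 1) :
    IsMT (triOfSets C hC) (fun j => (j.1 : ℤ) + 1) ↔
      ∀ (i : Fin N) (_ : i.1 + 1 < N), Interlaced (C (i.1 + 1)) (C (i.1 + 2)) := by
  have hbottom : BottomRow (triOfSets C hC) (fun j => (j.1 : ℤ) + 1) := by
    intro i h k
    have huniv : C (i.1 + 1) = univ := eq_univ_of_card _ (by rw [hC i, Fintype.card_fin, h])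
    have := orderEmbOfFin_unique (hC i) (fun k => huniv ▸ mem_univ (Fin.cast h k))
      (Fin.cast_strictMono h)
    simp [triOfSets, ← this]
  have hrows (i : Fin N) (k : Fin i.1) :
      triOfSets C hC i k.castSucc < triOfSets C hC i k.succ := by
    simp [triOfSets, (orderEmbOfFin _ (hC i)).strictMono (Fin.castSucc_lt_succ (i := k))]
  simp only [IsMT, hbottom, hrows, implies_true, and_true, true_and]
  refine forall_congr' fun i => forall_congr' fun h => ?_
  rw [interlaced_iff_orderEmbOfFin (hC i) (hC ⟨i.1 + 1, h⟩)]
  simp [triOfSets]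

lemma IsMT.mem_Icc {k : Fin N → ℤ} {lo hi : ℤ} (hT : IsMT T k) (hk : ∀ j, k j ∈ Set.Icc lo hi)
    (i : Fin N) (j : Fin (i.1 + 1)) : T i j ∈ Set.Icc lo hi := by
  suffices ∀ d, ∀ i : Fin N, i.1 + d + 1 = N → ∀ j, T i j ∈ Set.Icc lo hi from
    this (N - 1 - i.1) i (by omega) j
  intro d
  induction d with
  | zero => exact fun i hi j => hT.1 i (by omega) j ▸ hk _
  | succ d ih =>
    intro i hi j
    obtain ⟨h₁, h₂⟩ := hT.2.1 i (by omega) j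
    have hnext := ih ⟨i.1 + 1, by omega⟩ (by simp only; omega)
    exact ⟨(hnext j.castSucc).1.trans h₁, h₂.trans (hnext j.succ).2⟩

lemma IsMT.exists_eq_add_one (hT : IsMT T (fun j => (j.1 : ℤ) + 1)) (i : Fin N)
    (k : Fin (i.1 + 1)) : ∃ j : Fin N, T i k = j + 1 := by
  obtain ⟨h₁, h₂⟩ := hT.mem_Icc (lo := 1) (hi := N) (fun j => by simp) i k
  exact ⟨⟨(T i k - 1).toNat, by omega⟩, by simp; omega⟩

lemma IsMT.strictMono_row {k : Fin N → ℤ} (hT : IsMT T k) (i : Fin N) : StrictMono (T i) :=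
  Fin.strictMono_iff_lt_succ.mpr (hT.2.2 i)

theorem IsMT.eq_triOfSets (hT : IsMT T (fun j => (j.1 : ℤ) + 1))
    (hC : ∀ i : Fin N, #(C (i.1 + 1)) = i.1 + 1)
    (hmem : ∀ i j : Fin N, j ∈ C (i.1 + 1) ↔ ∃ k, T i k = j + 1) : T = triOfSets C hC := by
  funext i
  have hmono : StrictMono (triOfSets C hC i) := fun a b hab => by
    simpa [triOfSets] using (orderEmbOfFin _ (hC i)).strictMono hab
  refine ((hT.strictMono_row i).range_inj hmono).1 (Set.ext fun z => ⟨?_, ?_⟩)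
  · rintro ⟨k, rfl⟩
    obtain ⟨j, hj⟩ := hT.exists_eq_add_one i k
    rw [hj]
    exact (exists_triOfSets_eq_iff hC i j).2 ((hmem i j).2 ⟨k, hj⟩)
  · rintro ⟨k, rfl⟩
    obtain ⟨k', hk'⟩ := (hmem i _).1 (orderEmbOfFin_mem _ (hC i) k)
    exact ⟨k', hk'⟩

lemma rowSets_zero (T : TriArray N) : rowSets T 0 = ∅ := by
  simp [rowSets]

lemma mem_rowSets_succ (T : TriArray N) (i j : Fin N) :
    j ∈ rowSets T (i.1 + 1) ↔ ∃ k, T i k = j + 1 := by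
  simp only [rowSets, mem_filter, mem_univ, true_and]
  constructor
  · rintro ⟨i', k, hi, hk⟩
    obtain rfl : i' = i := Fin.ext (by omega)
    exact ⟨k, hk⟩
  · rintro ⟨k, hk⟩
    exact ⟨i, k, rfl, hk⟩

lemma IsMT.card_rowSets (hT : IsMT T (fun j => (j.1 : ℤ) + 1)) (i : Fin N) :
    #(rowSets T (i.1 + 1)) = i.1 + 1 := by
  have himage : (rowSets T (i.1 + 1)).image (fun j : Fin N => (j : ℤ) + 1) = univ.image (T i) := by
    ext z
    simp only [mem_image, mem_rowSets_succ, mem_univ, true_and]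
    constructor
    · rintro ⟨j, ⟨k, hk⟩, rfl⟩
      exact ⟨k, hk⟩
    · rintro ⟨k, rfl⟩
      obtain ⟨j, hj⟩ := hT.exists_eq_add_one i k
      exact ⟨j, ⟨k, hj⟩, hj.symm⟩
  have := congrArg card himage
  rwa [card_image_of_injective _ (fun a b h => Fin.ext (by simpa using h)),
    card_image_of_injective _ (hT.strictMono_row i).injective, card_univ, Fintype.card_fin] at this

end Triangles

section Bijection

variable {N : ℕ} {C : ℕ → Finset (Fin N)}

lemma asmCorr_matrixOfSets_triOfSets (h0 : C 0 = ∅)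
    (hC : ∀ i : Fin N, #(C (i.1 + 1)) = i.1 + 1) :
    ASMCorr (matrixOfSets C) (triOfSets C hC) := by
  intro i j
  rw [sum_Iic_col_matrixOfSets h0, exists_triOfSets_eq_iff]
  split_ifs <;> simpa

theorem isASM_matrixOfSets_iff_isMT_triOfSets (h0 : C 0 = ∅)
    (hC : ∀ i : Fin N, #(C (i.1 + 1)) = i.1 + 1) :
    IsASM (matrixOfSets C) ↔ IsMT (triOfSets C hC) (fun j => (j.1 : ℤ) + 1) := by
  rw [isASM_matrixOfSets_iff h0 hC, isMT_triOfSets_iff hC]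
  constructor
  · exact fun h i hi => h (i.1 + 1) hi
  · rintro h (_ | r) hr
    · have := hC ⟨0, hr⟩
      intro x
      simpa [h0] using (card_filter_le _ _).trans this.le
    · exact h ⟨r, by omega⟩ hr

theorem IsASM.existsUnique_isMT {M : Fin N → Fin N → ℤ} (hM : IsASM M) :
    ∃! T : TriArray N, IsMT T (fun j => (j.1 : ℤ) + 1) ∧ ASMCorr M T := by
  have h0 : colOnes M 0 = ∅ := by simp [colOnes]
  have hmem (i j : Fin N) : j ∈ colOnes M (i.1 + 1) ↔ ∑ i' ∈ Iic i, M i' j = 1 := by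
    simp [colOnes, sum_Iic_eq_prefixSum]
  have hM' : M = matrixOfSets (colOnes M) := hM.eq_matrixOfSets h0 hmem
  rw [hM'] at hM
  have hC := card_of_isASM_matrixOfSets hM h0
  have hcorrM := asmCorr_matrixOfSets_triOfSets h0 hC
  rw [← hM'] at hcorrM
  refine ⟨triOfSets _ hC, ⟨(isASM_matrixOfSets_iff_isMT_triOfSets h0 hC).1 hM, hcorrM⟩,
    fun T ⟨hT, hcorr⟩ => hT.eq_triOfSets hC fun i j => (hmem i j).trans (hcorr i j)⟩

theorem IsMT.existsUnique_isASM {T : TriArray N} (hT : IsMT T (fun j => (j.1 : ℤ) + 1)) :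
    ∃! M : Fin N → Fin N → ℤ, IsASM M ∧ ASMCorr M T := by
  have hC := hT.card_rowSets
  have hT' : T = triOfSets (rowSets T) hC := hT.eq_triOfSets hC (mem_rowSets_succ T)
  refine ⟨matrixOfSets (rowSets T), ⟨?_, ?_⟩, fun M ⟨hM, hcorr⟩ => ?_⟩
  · rw [isASM_matrixOfSets_iff_isMT_triOfSets (rowSets_zero T) hC, ← hT']
    exact hT
  · conv_rhs => rw [hT']
    exact asmCorr_matrixOfSets_triOfSets (rowSets_zero T) hC
  · exact hM.eq_matrixOfSets (rowSets_zero T) fun i j =>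
      (mem_rowSets_succ T i j).trans (hcorr i j).symm

end Bijection

/-- The map sending an `n × n` alternating sign matrix to the triangular array whose
`i`-th row consists of the columns `j`, listed in increasing order, for which the
partial column sum `Σ_{i'=1}^{i} a_{i',j}` equals `1`, is a bijection onto the set of
monotone triangles with bottom row `(1,2,…,n)`; in particular the number of `n × n`
alternating sign matrices equals the number of monotone triangles with bottom row
`(1,2,…,n)`. -/
theorem asm_mt_bijection (n : ℕ) :
    (∀ M : Fin (n + 1) → Fin (n + 1) → ℤ, IsASM M →
      ∃! T : TriArray (n + 1), IsMT T (fun j => (j.1 : ℤ) + 1) ∧ ASMCorr M T) ∧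
    (∀ T : TriArray (n + 1), IsMT T (fun j => (j.1 : ℤ) + 1) →
      ∃! M : Fin (n + 1) → Fin (n + 1) → ℤ, IsASM M ∧ ASMCorr M T) ∧
    Set.ncard {M : Fin (n + 1) → Fin (n + 1) → ℤ | IsASM M} =
      Set.ncard {T : TriArray (n + 1) | IsMT T (fun j => (j.1 : ℤ) + 1)} :=
  ⟨fun _ hM => hM.existsUnique_isMT, fun _ hT => hT.existsUnique_isASM,
    ncard_setOf_eq_of_existsUnique ASMCorr (fun _ hM => hM.existsUnique_isMT)
      fun _ hT => hT.existsUnique_isASM⟩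
end
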